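/- Let q be a prime power and L a field extension of Fq of degree m. Let 1 ≤ k < n, let H ∈ L^{k×n} have rank k, and let C = {x ∈ L^n : Hx = 0}. Let S be uniformly distributed on L^k and let X be a random variable with values in L^n whose conditional distribution given S = s is uniform on the coset {x ∈ L^n : Hx = s} for each s. If I(S; BX) = 0 for every matrix B ∈ Fq^{(n−k)×n} (acting on L^n via the embedding Fq ⊆ L), then m ≥ n and the minimum rank distance of C equals k + 1 (i.e., C is an MRD code). -/

import Mathlib

set_option autoImplicit false

open Matrix MeasureTheory

/-- Shannon entropy (in nats) of a finitely-valued random variable. -/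
noncomputable def entropy {Ω α : Type*} [Fintype α] [MeasurableSpace Ω]
    (P : Measure Ω) (X : Ω → α) : ℝ :=
  - ∑ a : α, (P {ω | X ω = a}).toReal * Real.log (P {ω | X ω = a}).toReal

/-- Mutual information (in nats) `I(X;Y) = H(X) + H(Y) - H(X,Y)`. -/
noncomputable def mutualInfo {Ω α β : Type*} [Fintype α] [Fintype β] [MeasurableSpace Ω]
    (P : Measure Ω) (X : Ω → α) (Y : Ω → β) : ℝ :=
  entropy P X + entropy P Y - entropy P (fun ω => (X ω, Y ω))

/-- The rank weight of `x ∈ L^n`: the dimension over `F` of the `F`-span of its coordinates. -/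
noncomputable def rankWeight (F : Type*) {L : Type*} [Field F] [Field L] [Algebra F L]
    {n : ℕ} (x : Fin n → L) : ℕ :=
  Module.finrank F (Submodule.span F (Set.range x))

/-- The minimum rank distance of a code `C ⊆ L^n` equals `d`. -/
def minRankDistEq (F : Type*) {L : Type*} [Field F] [Field L] [Algebra F L]
    {n : ℕ} (C : Set (Fin n → L)) (d : ℕ) : Prop :=
  IsLeast {e | ∃ x ∈ C, ∃ y ∈ C, x ≠ y ∧ rankWeight F (x - y) = e} d


/-! The two uniformity hypotheses make `X` uniform on `L^n`. For additive `f`, `f X` is then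
uniform on the image of `f`, so `H(f X) = log |im f|`; hence `I(HX; BX) = 0` with
`rank H + rank B = n` forces `x ↦ (Hx, Bx)` to be injective. A nonzero codeword `c` of rank
weight `≤ k` has an `F`-space of linear relations `{v ∈ F^n | ∑ v_j c_j = 0}` of dimension
`≥ n - k`; a basis of it gives the rows of a full-rank `B ∈ F^{(n-k)×n}` with `Bc = 0`, a
contradiction. So all nonzero codewords have rank weight `> k`. The Hamming Singleton bound
provides one of weight `≤ k + 1`, and the rank-metric Singleton bound
`m (n - k) = dim_F C ≤ n (m - k)` gives `n ≤ m`. -/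

open Finset Module

lemma card_image_mulVec {K ι κ : Type*} [Field K] [Fintype K] [DecidableEq K] [Fintype ι]
    [DecidableEq ι] [Fintype κ] (A : Matrix κ ι K) :
    #(univ.image (A *ᵥ ·)) = Fintype.card K ^ A.rank := by
  classical
  rw [Matrix.rank, ← Module.card_eq_pow_finrank, ← Set.toFinset_range, Set.toFinset_card]
  exact Fintype.card_congr (Equiv.setCongr rfl)

lemma rank_add_finrank_ker_mulVecLin {K ι κ : Type*} [Field K] [Fintype ι] [DecidableEq ι]
    (A : Matrix κ ι K) : A.rank + finrank K (LinearMap.ker A.mulVecLin) = Fintype.card ι := by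
  rw [Matrix.rank, LinearMap.finrank_range_add_finrank_ker, finrank_pi]

section FiniteProbability

variable {Ω : Type*} [MeasurableSpace Ω] (P : Measure Ω)

lemma entropy_eq_log_card {α : Type*} [Fintype α] [DecidableEq α] (Y : Ω → α) (S : Finset α)
    (hY : ∀ a, P.real {ω | Y ω = a} = if a ∈ S then (#S : ℝ)⁻¹ else 0) :
    entropy P Y = Real.log #S := by
  simp only [entropy, ← measureReal_def, hY]
  rcases S.eq_empty_or_nonempty with rfl | hS
  · simp
  have : (#S : ℝ) ≠ 0 := by exact_mod_cast hS.card_ne_zero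
  simp [apply_ite, Real.log_inv, mul_inv_cancel_left₀ this]

variable [Finite Ω] [MeasurableSingletonClass Ω] [IsProbabilityMeasure P]

lemma measureReal_comp_eq_sum {γ α : Type*} [Fintype γ] [DecidableEq α]
    (X : Ω → γ) (f : γ → α) (a : α) :
    P.real {ω | f (X ω) = a} = ∑ x with f x = a, P.real {ω | X ω = x} := by
  have hsum := sum_measureReal_preimage_singleton (μ := P) {x | f x = a}
    fun _ _ => (Set.toFinite _).measurableSet
  have hfiber : X ⁻¹' ↑({x | f x = a} : Finset γ) = {ω | f (X ω) = a} := by ext; simp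
  rw [hfiber] at hsum
  exact hsum.symm

lemma sum_measureReal_eq_one {γ : Type*} [Fintype γ] (X : Ω → γ) :
    ∑ x, P.real {ω | X ω = x} = 1 := by
  classical
  simpa using (measureReal_comp_eq_sum P X (fun _ => ()) ()).symm

lemma measureReal_eq_inv_card_of_forall_eq {γ : Type*} [Fintype γ] (X : Ω → γ)
    (hX : ∀ x y, P.real {ω | X ω = x} = P.real {ω | X ω = y}) (x : γ) :
    P.real {ω | X ω = x} = (Fintype.card γ : ℝ)⁻¹ := by
  have hsum := sum_measureReal_eq_one P X
  simp_rw [hX _ x, sum_const, card_univ, nsmul_eq_mul] at hsum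
  exact eq_inv_of_mul_eq_one_right hsum

lemma measureReal_eq_inv_card_of_fiberwise {G W Fn : Type*} [AddGroup G] [Fintype G]
    [AddMonoid W] [DecidableEq W] [FunLike Fn G W] [AddMonoidHomClass Fn G W] (f : Fn) (X : Ω → G)
    (hS : ∀ x y, P.real {ω | f (X ω) = f x} = P.real {ω | f (X ω) = f y})
    (hX : ∀ x y, f x = f y → P.real {ω | X ω = x} = P.real {ω | X ω = y}) (x : G) :
    P.real {ω | X ω = x} = (Fintype.card G : ℝ)⁻¹ := by
  have hfiber : ∀ z, P.real {ω | f (X ω) = f z} = #{y | f y = f z} * P.real {ω | X ω = z} := by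
    intro z
    rw [measureReal_comp_eq_sum, sum_congr rfl fun y hy => hX y z (mem_filter.mp hy).2,
      sum_const, nsmul_eq_mul]
  refine measureReal_eq_inv_card_of_forall_eq P X (fun x y => ?_) x
  have hcard : #{z | f z = f x} = #{z | f z = f y} :=
    AddMonoidHom.card_fiber_eq_of_mem_range f ⟨x, rfl⟩ ⟨y, rfl⟩
  have hpos : (0 : ℝ) < #{z | f z = f y} := by
    exact_mod_cast card_pos.mpr ⟨y, by simp⟩
  have := hS x y
  rw [hfiber, hfiber, hcard] at this
  exact mul_left_cancel₀ hpos.ne' this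

lemma measureReal_map_eq_of_uniform {G W Fn : Type*} [AddGroup G] [Fintype G]
    [AddMonoid W] [DecidableEq W] [FunLike Fn G W] [AddMonoidHomClass Fn G W] (f : Fn) (X : Ω → G)
    (hX : ∀ x, P.real {ω | X ω = x} = (Fintype.card G : ℝ)⁻¹) (a : W) :
    P.real {ω | f (X ω) = a} = if a ∈ univ.image f then (#(univ.image f) : ℝ)⁻¹ else 0 := by
  rw [measureReal_comp_eq_sum, sum_congr rfl fun x _ => hX x, sum_const, nsmul_eq_mul]
  split_ifs with ha
  · obtain ⟨x₀, -, rfl⟩ := mem_image.mp ha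
    have hcard : Fintype.card G = #(univ.image f) * #{x | f x = f x₀} := by
      rw [← card_univ, card_eq_sum_card_image f univ, ← smul_eq_mul, ← sum_const]
      refine sum_congr rfl fun b hb => ?_
      obtain ⟨y, -, rfl⟩ := mem_image.mp hb
      exact AddMonoidHom.card_fiber_eq_of_mem_range f ⟨y, rfl⟩ ⟨x₀, rfl⟩
    have hpos : (#{x | f x = f x₀} : ℝ) ≠ 0 := by exact_mod_cast (card_pos.mpr ⟨x₀, by simp⟩).ne'
    rw [hcard, Nat.cast_mul]
    field_simp
  · rw [filter_false_of_mem fun x _ (hx : f x = a) => ha (hx ▸ mem_image_of_mem f (mem_univ x))]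
    simp

lemma entropy_map_of_uniform {G W Fn : Type*} [AddGroup G] [Fintype G]
    [AddMonoid W] [Fintype W] [DecidableEq W] [FunLike Fn G W] [AddMonoidHomClass Fn G W]
    (f : Fn) (X : Ω → G) (hX : ∀ x, P.real {ω | X ω = x} = (Fintype.card G : ℝ)⁻¹) :
    entropy P (fun ω => f (X ω)) = Real.log #(univ.image f) :=
  entropy_eq_log_card P _ _ (measureReal_map_eq_of_uniform P f X hX)

lemma injective_prod_of_mutualInfo_eq_zero {G W₁ W₂ : Type*} [AddGroup G] [Fintype G]
    [AddMonoid W₁] [Fintype W₁] [DecidableEq W₁] [AddMonoid W₂] [Fintype W₂] [DecidableEq W₂]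
    (f : G →+ W₁) (g : G →+ W₂) (X : Ω → G)
    (hX : ∀ x, P.real {ω | X ω = x} = (Fintype.card G : ℝ)⁻¹)
    (hcard : #(univ.image f) * #(univ.image g) = Fintype.card G)
    (h : mutualInfo P (fun ω => f (X ω)) (fun ω => g (X ω)) = 0) :
    Function.Injective (f.prod g) := by
  have hpair : entropy P (fun ω => (f (X ω), g (X ω))) = Real.log #(univ.image (f.prod g)) :=
    entropy_map_of_uniform P (f.prod g) X hX
  rw [mutualInfo, entropy_map_of_uniform P f X hX, entropy_map_of_uniform P g X hX, hpair,
    ← Real.log_mul (by simp [univ_nonempty.ne_empty]) (by simp [univ_nonempty.ne_empty]),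
    sub_eq_zero] at h
  have hcard' : #(univ.image (f.prod g)) = #(univ : Finset G) := by
    rw [card_univ, ← hcard]
    exact_mod_cast (Real.log_injOn_pos (by simp) (by simp) h).symm
  rw [card_image_iff, coe_univ] at hcard'
  exact Set.injOn_univ.mp hcard'

lemma injective_mulVec_prod_of_mutualInfo_eq_zero {K ι κ κ' : Type*} [Field K] [Fintype K]
    [DecidableEq K] [Fintype ι] [DecidableEq ι] [Fintype κ] [DecidableEq κ] [Fintype κ']
    [DecidableEq κ'] (X : Ω → ι → K)
    (hX : ∀ x, P.real {ω | X ω = x} = (Fintype.card (ι → K) : ℝ)⁻¹)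
    (H : Matrix κ ι K) (B : Matrix κ' ι K) (hB : Function.Surjective B.mulVec)
    (hrank : H.rank + Fintype.card κ' = Fintype.card ι)
    (h : mutualInfo P (fun ω => H *ᵥ X ω) (fun ω => B *ᵥ X ω) = 0) :
    Function.Injective fun x => (H *ᵥ x, B *ᵥ x) := by
  refine injective_prod_of_mutualInfo_eq_zero P H.mulVecLin.toAddMonoidHom
    B.mulVecLin.toAddMonoidHom X hX ?_ h
  have hBimage : univ.image B.mulVec = univ := image_univ_of_surjective hB
  simp only [LinearMap.toAddMonoidHom_coe, Matrix.coe_mulVecLin]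
  rw [card_image_mulVec, hBimage, card_univ, Fintype.card_fun, Fintype.card_fun, ← pow_add, hrank]

end FiniteProbability

lemma exists_surjective_mulVec_rows_mem {F ι : Type*} [Field F] [Fintype ι] [DecidableEq ι]
    (K : Submodule F (ι → F)) {r : ℕ} (hr : r ≤ finrank F K) :
    ∃ B : Matrix (Fin r) ι F, (∀ i, B i ∈ K) ∧ Function.Surjective B.mulVec := by
  let v : Fin r → K := finBasis F K ∘ Fin.castLE hr
  have hv : LinearIndependent F (K.subtype ∘ v) :=
    ((finBasis F K).linearIndependent.comp _ (Fin.castLE_injective hr)).map' _ K.ker_subtype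
  refine ⟨Matrix.of fun i => (v i : ι → F), fun i => (v i).2, ?_⟩
  have hrank := hv.rank_matrix (M := Matrix.of fun i => (v i : ι → F))
  rw [Matrix.rank, Fintype.card_fin] at hrank
  exact LinearMap.range_eq_top.mp (Submodule.eq_top_of_finrank_eq (hrank.trans (by simp)))

lemma surjective_mulVec_map {R S m n : Type*} [CommSemiring R] [CommSemiring S] [Fintype m]
    [DecidableEq m] [Fintype n] (f : R →+* S) {B : Matrix m n R}
    (hB : Function.Surjective B.mulVec) :
    Function.Surjective (B.map f).mulVec := by
  obtain ⟨R', hR'⟩ := mulVec_surjective_iff_exists_right_inverse.mp hB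
  refine mulVec_surjective_iff_exists_right_inverse.mpr ⟨R'.map f, ?_⟩
  rw [← Matrix.map_mul, hR', Matrix.map_one f f.map_zero f.map_one]

lemma Submodule.exists_finrank_eq {K V : Type*} [DivisionRing K] [AddCommGroup V] [Module K V]
    [FiniteDimensional K V] {k : ℕ} (hk : k ≤ finrank K V) : ∃ W : Submodule K V, finrank K W = k :=
  ⟨_, (finrank_span_eq_card ((finBasis K V).linearIndependent.comp _
    (Fin.castLE_injective hk))).trans (Fintype.card_fin k)⟩

lemma hammingNorm_le_of_forall_lt_eq_zero {β : Type*} [Zero β] [DecidableEq β] {n : ℕ}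
    {x : Fin n → β} {s : ℕ} (hx : ∀ j : Fin n, j.val < s → x j = 0) : hammingNorm x ≤ n - s := by
  have hsub : filter (fun j => x j ≠ 0) univ ⊆ filter (fun j : Fin n => ¬ j.val < s) univ :=
    fun j hj => by simp only [mem_filter, mem_univ, true_and] at hj ⊢; exact mt (hx j) hj
  have hsplit := card_filter_add_card_filter_not (s := univ) (p := fun j : Fin n => j.val < s)
  rw [Fin.card_filter_val_lt, card_univ, Fintype.card_fin] at hsplit
  have := card_le_card hsub
  unfold hammingNorm
  omega

section RankWeight

variable {F L : Type*} [Field F] [Field L] [Algebra F L] {n : ℕ}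

lemma rankWeight_le_finrank_of_forall_mem (K : Submodule F L) [FiniteDimensional F K]
    {x : Fin n → L} (hx : ∀ j, x j ∈ K) : rankWeight F x ≤ finrank F K :=
  Submodule.finrank_mono (Submodule.span_le.mpr (Set.range_subset_iff.mpr hx))

lemma rankWeight_le_hammingNorm [DecidableEq L] (x : Fin n → L) :
    rankWeight F x ≤ hammingNorm x := by
  let s : Finset L := image x {j | x j ≠ 0}
  have hx : ∀ j, x j ∈ Submodule.span F (s : Set L) := by
    intro j
    by_cases hj : x j = 0
    · rw [hj]; exact Submodule.zero_mem _
    · exact Submodule.subset_span (mem_image_of_mem x (by simpa using hj))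
  calc rankWeight F x ≤ finrank F (Submodule.span F (s : Set L)) :=
        rankWeight_le_finrank_of_forall_mem _ hx
    _ ≤ #s := finrank_span_finset_le_card s
    _ ≤ hammingNorm x := card_image_le

lemma exists_ne_zero_rankWeight_le (C : Submodule L (Fin n → L)) {t : ℕ}
    (h : n - t < finrank L C) : ∃ c ∈ C, c ≠ 0 ∧ rankWeight F c ≤ t := by
  classical
  let π := LinearMap.funLeft L L (Fin.castLE (n.sub_le t)) ∘ₗ C.subtype
  obtain ⟨⟨c, hcC⟩, hπc, hc⟩ :=
    (Submodule.ne_bot_iff _).mp (LinearMap.ker_ne_bot_of_finrank_lt (f := π) (by simpa using h))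
  refine ⟨c, hcC, by simpa using hc, (rankWeight_le_hammingNorm c).trans ?_⟩
  refine (hammingNorm_le_of_forall_lt_eq_zero (s := n - t) fun j hj => ?_).trans (by omega)
  exact congrFun (LinearMap.mem_ker.mp hπc) ⟨j, hj⟩

lemma map_algebraMap_mulVec_apply {κ : Type*} (B : Matrix κ (Fin n) F) (c : Fin n → L) (i : κ) :
    (B.map (algebraMap F L) *ᵥ c) i = Fintype.linearCombination F c (B i) := by
  simp [Matrix.mulVec, dotProduct, Fintype.linearCombination_apply, Algebra.smul_def]

lemma exists_surjective_map_mulVec_eq_zero (c : Fin n → L) {r : ℕ} (h : rankWeight F c + r ≤ n) :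
    ∃ B : Matrix (Fin r) (Fin n) F,
      Function.Surjective (B.map (algebraMap F L)).mulVec ∧ B.map (algebraMap F L) *ᵥ c = 0 := by
  let φ := Fintype.linearCombination F c
  have hker : r ≤ finrank F (LinearMap.ker φ) := by
    have := LinearMap.finrank_range_add_finrank_ker φ
    rw [Fintype.range_linearCombination, finrank_fin_fun] at this
    unfold rankWeight at h
    omega
  obtain ⟨B, hBrows, hB⟩ := exists_surjective_mulVec_rows_mem _ hker
  refine ⟨B, surjective_mulVec_map _ hB, funext fun i => ?_⟩
  rw [map_algebraMap_mulVec_apply]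
  exact hBrows i

lemma finrank_le_of_finrank_lt_rankWeight [FiniteDimensional F L] (C : Submodule F (Fin n → L))
    (K : Submodule F L) (hC : ∀ x ∈ C, x ≠ 0 → finrank F K < rankWeight F x) :
    finrank F C ≤ n * (finrank F L - finrank F K) := by
  let Φ := LinearMap.compLeft K.mkQ (Fin n) ∘ₗ C.subtype
  have hΦ : Function.Injective Φ := by
    rw [← LinearMap.ker_eq_bot, LinearMap.ker_eq_bot']
    intro x hx
    by_contra hx0
    have hmem : ∀ j, (x : Fin n → L) j ∈ K :=
      fun j => (Submodule.Quotient.mk_eq_zero K).mp (congrFun hx j)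
    exact (hC x x.2 (by simpa using hx0)).not_ge (rankWeight_le_finrank_of_forall_mem K hmem)
  calc finrank F C ≤ finrank F (Fin n → L ⧸ K) := LinearMap.finrank_le_finrank_of_injective hΦ
    _ = n * (finrank F L - finrank F K) := by
      rw [Module.finrank_pi_fintype, sum_const, card_univ, Fintype.card_fin, smul_eq_mul,
        Submodule.finrank_quotient]

lemma minRankDistEq_of_forall_le (C : Submodule L (Fin n → L)) {d : ℕ}
    (hmin : ∀ c ∈ C, c ≠ 0 → d ≤ rankWeight F c) (hd : ∃ c ∈ C, c ≠ 0 ∧ rankWeight F c = d) :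
    minRankDistEq F (C : Set (Fin n → L)) d := by
  obtain ⟨c, hcC, hc, rfl⟩ := hd
  refine ⟨⟨c, hcC, 0, C.zero_mem, hc, by rw [sub_zero]⟩, ?_⟩
  rintro e ⟨x, hx, y, hy, hxy, rfl⟩
  exact hmin _ (C.sub_mem hx hy) (sub_ne_zero.mpr hxy)

lemma lt_rankWeight_of_mutualInfo_eq_zero {Ω : Type*} [MeasurableSpace Ω] [Finite Ω]
    [MeasurableSingletonClass Ω] (P : Measure Ω) [IsProbabilityMeasure P] [Fintype L]
    [DecidableEq L] {κ : Type*} [Fintype κ] [DecidableEq κ] {k : ℕ} (X : Ω → Fin n → L)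
    (hX : ∀ x, P.real {ω | X ω = x} = (Fintype.card (Fin n → L) : ℝ)⁻¹)
    (H : Matrix κ (Fin n) L) (hH : H.rank = k) (hkn : k ≤ n)
    (hsec : ∀ B : Matrix (Fin (n - k)) (Fin n) F,
      mutualInfo P (fun ω => H *ᵥ X ω) (fun ω => B.map (algebraMap F L) *ᵥ X ω) = 0)
    {c : Fin n → L} (hc : H *ᵥ c = 0) (hc0 : c ≠ 0) : k < rankWeight F c := by
  by_contra! hle
  obtain ⟨B, hB, hBc⟩ := exists_surjective_map_mulVec_eq_zero (F := F) c (r := n - k) (by omega)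
  have hinj := injective_mulVec_prod_of_mutualInfo_eq_zero P X hX H _ hB
    (by rw [hH, Fintype.card_fin, Fintype.card_fin]; omega) (hsec B)
  exact hc0 (hinj (by simp [hc, hBc]))

end RankWeight

theorem cosetCoding_secure_implies_MRD_general
    (m : ℕ)
    (F L : Type) [Field F]
    [Field L] [Fintype L] [Algebra F L] (hm : Module.finrank F L = m)
    (n k : ℕ) (hk : 1 ≤ k) (hkn : k < n)
    (H : Matrix (Fin k) (Fin n) L) (hH : H.rank = k)
    (Ω : Type) [Fintype Ω] [MeasurableSpace Ω] [MeasurableSingletonClass Ω]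
    (P : Measure Ω) [IsProbabilityMeasure P]
    (X : Ω → Fin n → L)
    (hSunif : ∀ s₁ s₂ : Fin k → L,
      P {ω | H *ᵥ X ω = s₁} = P {ω | H *ᵥ X ω = s₂})
    (hXunif : ∀ x₁ x₂ : Fin n → L, H *ᵥ x₁ = H *ᵥ x₂ →
      P {ω | X ω = x₁} = P {ω | X ω = x₂})
    (hsec : ∀ B : Matrix (Fin (n - k)) (Fin n) F,
      mutualInfo P (fun ω => H *ᵥ X ω)
        (fun ω => (B.map (algebraMap F L)) *ᵥ X ω) = 0) :
    n ≤ m ∧ minRankDistEq F {x : Fin n → L | H *ᵥ x = 0} (k + 1) := by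
  classical
  subst hm
  have hX := measureReal_eq_inv_card_of_fiberwise P H.mulVecLin X
    (fun _ _ => congrArg ENNReal.toReal (hSunif _ _))
    (fun x y h => congrArg ENNReal.toReal (hXunif x y h))
  let C := LinearMap.ker H.mulVecLin
  have hC : finrank L C = n - k :=
    Nat.eq_sub_of_add_eq' (by simpa [hH] using rank_add_finrank_ker_mulVecLin H)
  have hmin : ∀ c ∈ C, c ≠ 0 → k + 1 ≤ rankWeight F c :=
    fun c hcC hc => lt_rankWeight_of_mutualInfo_eq_zero P X hX H hH hkn.le hsec hcC hc
  obtain ⟨c₀, hc₀C, hc₀, hc₀w⟩ := exists_ne_zero_rankWeight_le (F := F) C (t := k + 1) (by omega)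
  have hkm : k + 1 ≤ finrank F L := (hmin c₀ hc₀C hc₀).trans (Submodule.finrank_le _)
  obtain ⟨K, hK⟩ := Submodule.exists_finrank_eq (K := F) (V := L) (k := k) (by omega)
  have hsingleton := finrank_le_of_finrank_lt_rankWeight (C.restrictScalars F) K
    fun c hcC hc => hK ▸ hmin c hcC hc
  rw [show finrank F (C.restrictScalars F) = finrank F C from rfl,
    ← Module.finrank_mul_finrank F L C, hC, hK] at hsingleton
  refine ⟨?_, minRankDistEq_of_forall_le C hmin
    ⟨c₀, hc₀C, hc₀, le_antisymm hc₀w (hmin c₀ hc₀C hc₀)⟩⟩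
  zify [(by omega : k ≤ finrank F L), hkn.le] at hsingleton
  nlinarith

/-- Converse to MRD coset coding: if the message `S = HX` is uniform on `L^k`, `X` is
conditionally uniform on each coset `{x : Hx = s}`, and `I(S;BX) = 0` for every
`B ∈ F^{(n-k)×n}`, then `m ≥ n` and the code `C = {x : Hx = 0}` has minimum rank
distance `k + 1` (i.e., `C` is MRD). -/
theorem cosetCoding_secure_implies_MRD
    (q m : ℕ) (hq : IsPrimePow q)
    (F L : Type) [Field F] [Fintype F] (hF : Fintype.card F = q)
    [Field L] [Fintype L] [Algebra F L] (hm : Module.finrank F L = m)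
    (n k : ℕ) (hk : 1 ≤ k) (hkn : k < n)
    (H : Matrix (Fin k) (Fin n) L) (hH : H.rank = k)
    (Ω : Type) [Fintype Ω] [MeasurableSpace Ω] [MeasurableSingletonClass Ω]
    (P : Measure Ω) [IsProbabilityMeasure P]
    (X : Ω → Fin n → L)
    (hSunif : ∀ s₁ s₂ : Fin k → L,
      P {ω | H *ᵥ X ω = s₁} = P {ω | H *ᵥ X ω = s₂})
    (hXunif : ∀ x₁ x₂ : Fin n → L, H *ᵥ x₁ = H *ᵥ x₂ →
      P {ω | X ω = x₁} = P {ω | X ω = x₂})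
    (hsec : ∀ B : Matrix (Fin (n - k)) (Fin n) F,
      mutualInfo P (fun ω => H *ᵥ X ω)
        (fun ω => (B.map (algebraMap F L)) *ᵥ X ω) = 0) :
    n ≤ m ∧ minRankDistEq F {x : Fin n → L | H *ᵥ x = 0} (k + 1) :=
  cosetCoding_secure_implies_MRD_general m F L hm n k hk hkn H hH Ω P X hSunif hXunif hsec
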